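/- arXiv:2202.01541 — 2 statements merged into one kernel-verified Lean document; each statement's English description precedes it below -/
import Mathlib

section
/- For smooth g : ℝ^d → ℝ^d, let F_a and F_b be the Lie derivative operators (F_a u)(y,v) = D u(y,v)·(v,0) and (F_b u)(y,v) = D u(y,v)·(0, g(y)) acting on smooth functions u : ℝ^{2d} → ℝ. Then the commutator [F_b,[F_a,F_b]] acts as the Lie derivative along the vector field (0, 2·Dg(y)·g(y)), i.e., [F_b,[F_a,F_b]] u (y,v) = D u(y,v)·(0, 2 Dg(y) g(y)). -/
/-- Lie derivative along f_a(y,v) = (v, 0). -/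
noncomputable def Fa (d : ℕ) (u : (Fin d → ℝ) × (Fin d → ℝ) → ℝ) :
    (Fin d → ℝ) × (Fin d → ℝ) → ℝ :=
  fun x => fderiv ℝ u x (x.2, 0)

/-- Lie derivative along f_b(y,v) = (0, g(y)). -/
noncomputable def Fb (d : ℕ) (g : (Fin d → ℝ) → (Fin d → ℝ))
    (u : (Fin d → ℝ) × (Fin d → ℝ) → ℝ) :
    (Fin d → ℝ) × (Fin d → ℝ) → ℝ :=
  fun x => fderiv ℝ u x (0, g x.1)

/-- Commutator of operators on functions. -/
noncomputable def opComm (d : ℕ)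
    (A B : ((Fin d → ℝ) × (Fin d → ℝ) → ℝ) → ((Fin d → ℝ) × (Fin d → ℝ) → ℝ))
    (u : (Fin d → ℝ) × (Fin d → ℝ) → ℝ) :
    (Fin d → ℝ) × (Fin d → ℝ) → ℝ :=
  A (B u) - B (A u)

section Helpers

variable {E : Type*} [NormedAddCommGroup E] [NormedSpace ℝ E]

/-- Derivative of a Lie derivative, applied to a vector. -/
lemma fderiv_lie_apply {u : E → ℝ} {V : E → E} {x : E}
    (hu : DifferentiableAt ℝ (fderiv ℝ u) x) (hV : DifferentiableAt ℝ V x) (w : E) :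
    fderiv ℝ (fun y => fderiv ℝ u y (V y)) x w
      = fderiv ℝ u x (fderiv ℝ V x w) + fderiv ℝ (fderiv ℝ u) x w (V x) := by
  rw [fderiv_clm_apply hu hV]
  simp

end Helpers

section Concrete

variable {d : ℕ} {g : (Fin d → ℝ) → (Fin d → ℝ)}

local notation "Vv" => (Fin d → ℝ)
local notation "E2" => (Fin d → ℝ) × (Fin d → ℝ)

lemma hasFDerivAt_gfst (hg : ContDiff ℝ (⊤ : ℕ∞) g) (x : E2) :
    HasFDerivAt (fun y : E2 => g y.1)
      ((fderiv ℝ g x.1).comp (ContinuousLinearMap.fst ℝ Vv Vv)) x :=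
  ((hg.differentiable (by simp) x.1).hasFDerivAt).comp x hasFDerivAt_fst

lemma fderiv_Va (x w : E2) :
    fderiv ℝ (fun y : E2 => (y.2, (0 : Vv))) x w = (w.2, 0) := by
  have h : HasFDerivAt (fun y : E2 => (y.2, (0 : Vv)))
      ((ContinuousLinearMap.snd ℝ Vv Vv).prod 0) x :=
    hasFDerivAt_snd.prodMk (hasFDerivAt_const _ _)
  rw [h.fderiv]; rfl

lemma fderiv_Vb (hg : ContDiff ℝ (⊤ : ℕ∞) g) (x w : E2) :
    fderiv ℝ (fun y : E2 => ((0 : Vv), g y.1)) x w = (0, fderiv ℝ g x.1 w.1) := by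
  have h : HasFDerivAt (fun y : E2 => ((0 : Vv), g y.1))
      ((0 : E2 →L[ℝ] Vv).prod ((fderiv ℝ g x.1).comp (ContinuousLinearMap.fst ℝ Vv Vv))) x :=
    (hasFDerivAt_const _ _).prodMk (hasFDerivAt_gfst hg x)
  rw [h.fderiv]; rfl

lemma fderiv_W (hg : ContDiff ℝ (⊤ : ℕ∞) g) (x : E2) :
    fderiv ℝ (fun y : E2 => (-(g y.1), fderiv ℝ g y.1 y.2)) x (0, g x.1)
      = (0, fderiv ℝ g x.1 (g x.1)) := by
  have hc : HasFDerivAt (fun y : E2 => fderiv ℝ g y.1)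
      ((fderiv ℝ (fderiv ℝ g) x.1).comp (ContinuousLinearMap.fst ℝ Vv Vv)) x := by
    have : DifferentiableAt ℝ (fderiv ℝ g) x.1 :=
      ((hg.fderiv_right (m := 1) (WithTop.coe_le_coe.mpr le_top)).differentiable one_ne_zero).differentiableAt
    exact this.hasFDerivAt.comp x hasFDerivAt_fst
  have hsnd : HasFDerivAt (fun y : E2 => fderiv ℝ g y.1 y.2)
      ((fderiv ℝ g x.1).comp (ContinuousLinearMap.snd ℝ Vv Vv)
        + (((fderiv ℝ (fderiv ℝ g) x.1).comp (ContinuousLinearMap.fst ℝ Vv Vv)).flip x.2)) x :=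
    hc.clm_apply hasFDerivAt_snd
  have hfst : HasFDerivAt (fun y : E2 => -(g y.1))
      (-((fderiv ℝ g x.1).comp (ContinuousLinearMap.fst ℝ Vv Vv))) x :=
    (hasFDerivAt_gfst hg x).neg
  have h := hfst.prodMk hsnd
  rw [h.fderiv]
  simp

/-- The inner commutator [F_a, F_b] is the Lie derivative along (-g(y), Dg(y)·v). -/
lemma inner_comm (hg : ContDiff ℝ (⊤ : ℕ∞) g) (v : E2 → ℝ) (hv : ContDiff ℝ (⊤ : ℕ∞) v) (x : E2) :
    opComm d (Fa d) (Fb d g) v x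
      = fderiv ℝ v x (-(g x.1), fderiv ℝ g x.1 x.2) := by
  have hdv : DifferentiableAt ℝ (fderiv ℝ v) x :=
    ((hv.fderiv_right (m := 1) (WithTop.coe_le_coe.mpr le_top)).differentiable one_ne_zero).differentiableAt
  have hVb : DifferentiableAt ℝ (fun y : E2 => ((0 : Vv), g y.1)) x :=
    ((contDiff_const.prodMk (hg.comp contDiff_fst)).differentiable (by simp)).differentiableAt
  have hVa : DifferentiableAt ℝ (fun y : E2 => (y.2, (0 : Vv))) x :=
    ((contDiff_snd.prodMk (n := 1) contDiff_const).differentiable one_ne_zero).differentiableAt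
  have e1 : opComm d (Fa d) (Fb d g) v x
      = fderiv ℝ (fun y : E2 => fderiv ℝ v y (0, g y.1)) x (x.2, 0)
        - fderiv ℝ (fun y : E2 => fderiv ℝ v y (y.2, 0)) x (0, g x.1) := rfl
  rw [e1, fderiv_lie_apply hdv hVb, fderiv_lie_apply hdv hVa, fderiv_Vb hg, fderiv_Va]
  have hsym : fderiv ℝ (fderiv ℝ v) x (x.2, (0 : Vv)) (0, g x.1)
      = fderiv ℝ (fderiv ℝ v) x (0, g x.1) (x.2, (0 : Vv)) :=
    ((hv.contDiffAt (x := x)).isSymmSndFDerivAt (by simp; exact WithTop.coe_le_coe.mpr le_top)).eq _ _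
  rw [hsym]
  simp only [show ((x.2, (0 : Vv)) : E2).1 = x.2 from rfl,
    show (((0 : Vv), g x.1) : E2).2 = g x.1 from rfl]
  have e2 : ((-(g x.1), fderiv ℝ g x.1 x.2) : E2)
      = ((0 : Vv), fderiv ℝ g x.1 x.2) - (g x.1, 0) := by
    simp [Prod.ext_iff]
  rw [e2, map_sub]
  ring

end Concrete

/-- [F_b,[F_a,F_b]] acts as the Lie derivative along (0, 2·Dg(y)·g(y)). -/
theorem comm_Fb_Fa_Fb (d : ℕ) (g : (Fin d → ℝ) → (Fin d → ℝ)) (hg : ContDiff ℝ (⊤ : ℕ∞) g)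
    (u : (Fin d → ℝ) × (Fin d → ℝ) → ℝ) (hu : ContDiff ℝ (⊤ : ℕ∞) u) :
    ∀ x : (Fin d → ℝ) × (Fin d → ℝ),
      opComm d (Fb d g) (opComm d (Fa d) (Fb d g)) u x =
        fderiv ℝ u x (0, (2 : ℝ) • fderiv ℝ g x.1 (g x.1)) := by
  intro x
  have hdu : DifferentiableAt ℝ (fderiv ℝ u) x :=
    ((hu.fderiv_right (m := 1) (WithTop.coe_le_coe.mpr le_top)).differentiable one_ne_zero).differentiableAt
  have hWsm : ContDiff ℝ (⊤ : ℕ∞) (fun y : (Fin d → ℝ) × (Fin d → ℝ) =>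
      ((-(g y.1), fderiv ℝ g y.1 y.2) : (Fin d → ℝ) × (Fin d → ℝ))) :=
    ((hg.comp contDiff_fst).neg).prodMk
      (((hg.fderiv_right (by simp)).comp contDiff_fst).clm_apply contDiff_snd)
  have hVbsm : ContDiff ℝ (⊤ : ℕ∞) (fun y : (Fin d → ℝ) × (Fin d → ℝ) =>
      (((0 : Fin d → ℝ), g y.1) : (Fin d → ℝ) × (Fin d → ℝ))) :=
    contDiff_const.prodMk (hg.comp contDiff_fst)
  have hFbu : ContDiff ℝ (⊤ : ℕ∞) (Fb d g u) :=
    (hu.fderiv_right (by simp)).clm_apply hVbsm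
  have hCu : opComm d (Fa d) (Fb d g) u
      = fun y => fderiv ℝ u y (-(g y.1), fderiv ℝ g y.1 y.2) :=
    funext (inner_comm hg u hu)
  have e0 : opComm d (Fb d g) (opComm d (Fa d) (Fb d g)) u x
      = Fb d g (opComm d (Fa d) (Fb d g) u) x
        - opComm d (Fa d) (Fb d g) (Fb d g u) x := rfl
  rw [e0, hCu, inner_comm hg (Fb d g u) hFbu x]
  have e1 : Fb d g (fun y => fderiv ℝ u y (-(g y.1), fderiv ℝ g y.1 y.2)) x
      = fderiv ℝ (fun y => fderiv ℝ u y (-(g y.1), fderiv ℝ g y.1 y.2)) x (0, g x.1) := rfl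
  rw [e1, fderiv_lie_apply hdu (hWsm.differentiable (by simp)).differentiableAt, fderiv_W hg]
  have e2 : fderiv ℝ (Fb d g u) x (-(g x.1), fderiv ℝ g x.1 x.2)
      = fderiv ℝ (fun y => fderiv ℝ u y ((0 : Fin d → ℝ), g y.1)) x
          (-(g x.1), fderiv ℝ g x.1 x.2) := rfl
  rw [e2, fderiv_lie_apply hdu (hVbsm.differentiable (by simp)).differentiableAt, fderiv_Vb hg]
  have hsym : fderiv ℝ (fderiv ℝ u) x ((0 : Fin d → ℝ), g x.1)
        (-(g x.1), fderiv ℝ g x.1 x.2)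
      = fderiv ℝ (fderiv ℝ u) x (-(g x.1), fderiv ℝ g x.1 x.2)
        ((0 : Fin d → ℝ), g x.1) :=
    ((hu.contDiffAt (x := x)).isSymmSndFDerivAt (by simp; exact WithTop.coe_le_coe.mpr le_top)).eq _ _
  rw [hsym]
  simp only [show ((-(g x.1), fderiv ℝ g x.1 x.2)
      : (Fin d → ℝ) × (Fin d → ℝ)).1 = -(g x.1) from rfl, map_neg]
  have e3 : (((0 : Fin d → ℝ), (2 : ℝ) • fderiv ℝ g x.1 (g x.1))
        : (Fin d → ℝ) × (Fin d → ℝ))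
      = ((0 : Fin d → ℝ), fderiv ℝ g x.1 (g x.1))
        - (0, -(fderiv ℝ g x.1 (g x.1))) := by
    simp [Prod.ext_iff, two_smul ℝ, sub_neg_eq_add]
  rw [e3, map_sub]
  ring
end

section
/- For smooth g : ℝ^d → ℝ^d, with F_a and F_b as the Lie derivatives along f_a(y,v) = (v,0) and f_b(y,v) = (0,g(y)), the iterated commutator [F_b, [F_b, [F_a, F_b]]] is identically zero on smooth functions. -/
section Aux

variable {E : Type*} [NormedAddCommGroup E] [NormedSpace ℝ E]

lemma lie_smooth {u : E → ℝ} {X : E → E} (hu : ContDiff ℝ (⊤ : ℕ∞) u) (hX : ContDiff ℝ (⊤ : ℕ∞) X) :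
    ContDiff ℝ (⊤ : ℕ∞) (fun x => fderiv ℝ u x (X x)) :=
  (hu.fderiv_right (by simp)).clm_apply hX

lemma lie_comm {u : E → ℝ} {X Y : E → E} (hu : ContDiff ℝ (⊤ : ℕ∞) u) (hX : ContDiff ℝ (⊤ : ℕ∞) X)
    (hY : ContDiff ℝ (⊤ : ℕ∞) Y) (x : E) :
    fderiv ℝ (fun y => fderiv ℝ u y (Y y)) x (X x)
      - fderiv ℝ (fun y => fderiv ℝ u y (X y)) x (Y x)
      = fderiv ℝ u x (fderiv ℝ Y x (X x) - fderiv ℝ X x (Y x)) := by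
  have hud : Differentiable ℝ u := hu.differentiable (by simp)
  have hud' : DifferentiableAt ℝ (fderiv ℝ u) x :=
    ((hu.fderiv_right (m := 1) (WithTop.coe_le_coe.mpr le_top)).differentiable one_ne_zero) x
  rw [fderiv_clm_apply hud' ((hY.differentiable (by simp)) x),
      fderiv_clm_apply hud' ((hX.differentiable (by simp)) x)]
  have hsymm := second_derivative_symmetric (f := u) (f' := fderiv ℝ u)
    (f'' := fderiv ℝ (fderiv ℝ u) x) (fun y => (hud y).hasFDerivAt)
    hud'.hasFDerivAt (X x) (Y x)
  simp only [ContinuousLinearMap.add_apply, ContinuousLinearMap.coe_comp',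
    Function.comp_apply, ContinuousLinearMap.flip_apply, map_sub]
  rw [hsymm]
  ring

end Aux

section Fields

variable {d : ℕ} {g : (Fin d → ℝ) → (Fin d → ℝ)}

/-- The vector field `[f_a, f_b]`. -/
noncomputable def fcV (d : ℕ) (g : (Fin d → ℝ) → (Fin d → ℝ))
    (x : (Fin d → ℝ) × (Fin d → ℝ)) : (Fin d → ℝ) × (Fin d → ℝ) :=
  (-(g x.1), fderiv ℝ g x.1 x.2)

/-- The vector field `[f_b, [f_a, f_b]]`. -/
noncomputable def fdV (d : ℕ) (g : (Fin d → ℝ) → (Fin d → ℝ))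
    (x : (Fin d → ℝ) × (Fin d → ℝ)) : (Fin d → ℝ) × (Fin d → ℝ) :=
  (0, fderiv ℝ g x.1 (g x.1) + fderiv ℝ g x.1 (g x.1))

lemma fa_smooth : ContDiff ℝ (⊤ : ℕ∞) (fun x : (Fin d → ℝ) × (Fin d → ℝ) => (x.2, (0 : Fin d → ℝ))) :=
  contDiff_snd.prodMk contDiff_const

lemma fb_smooth (hg : ContDiff ℝ (⊤ : ℕ∞) g) :
    ContDiff ℝ (⊤ : ℕ∞) (fun x : (Fin d → ℝ) × (Fin d → ℝ) => ((0 : Fin d → ℝ), g x.1)) :=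
  contDiff_const.prodMk (hg.comp contDiff_fst)

lemma fc_smooth (hg : ContDiff ℝ (⊤ : ℕ∞) g) : ContDiff ℝ (⊤ : ℕ∞) (fcV d g) :=
  (hg.comp contDiff_fst).neg.prodMk
    (((hg.fderiv_right (by simp)).comp contDiff_fst).clm_apply contDiff_snd)

lemma fd_smooth (hg : ContDiff ℝ (⊤ : ℕ∞) g) : ContDiff ℝ (⊤ : ℕ∞) (fdV d g) :=
  contDiff_const.prodMk
    ((((hg.fderiv_right (by simp)).clm_apply hg).comp contDiff_fst).add
      (((hg.fderiv_right (by simp)).clm_apply hg).comp contDiff_fst))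

lemma fderiv_fa_apply (x w : (Fin d → ℝ) × (Fin d → ℝ)) :
    fderiv ℝ (fun x : (Fin d → ℝ) × (Fin d → ℝ) => (x.2, (0 : Fin d → ℝ))) x w
      = (w.2, 0) := by
  have h : HasFDerivAt (fun x : (Fin d → ℝ) × (Fin d → ℝ) => (x.2, (0 : Fin d → ℝ)))
      ((ContinuousLinearMap.snd ℝ (Fin d → ℝ) (Fin d → ℝ)).prod 0) x :=
    (hasFDerivAt_snd).prodMk (hasFDerivAt_const _ _)
  rw [h.fderiv]; rfl

lemma fderiv_fb_apply (hg : ContDiff ℝ (⊤ : ℕ∞) g) (x w : (Fin d → ℝ) × (Fin d → ℝ)) :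
    fderiv ℝ (fun x : (Fin d → ℝ) × (Fin d → ℝ) => ((0 : Fin d → ℝ), g x.1)) x w
      = (0, fderiv ℝ g x.1 w.1) := by
  have h : HasFDerivAt (fun x : (Fin d → ℝ) × (Fin d → ℝ) => ((0 : Fin d → ℝ), g x.1))
      ((0 : _ →L[ℝ] (Fin d → ℝ)).prod
        ((fderiv ℝ g x.1).comp (ContinuousLinearMap.fst ℝ (Fin d → ℝ) (Fin d → ℝ)))) x :=
    (hasFDerivAt_const _ _).prodMk
      (((hg.differentiable (by simp) x.1).hasFDerivAt).comp x hasFDerivAt_fst)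
  rw [h.fderiv]; rfl

lemma fderiv_fc_fb (hg : ContDiff ℝ (⊤ : ℕ∞) g) (x : (Fin d → ℝ) × (Fin d → ℝ)) :
    fderiv ℝ (fcV d g) x (0, g x.1) = (0, fderiv ℝ g x.1 (g x.1)) := by
  have h1 : HasFDerivAt (fun x : (Fin d → ℝ) × (Fin d → ℝ) => -(g x.1))
      (-((fderiv ℝ g x.1).comp (ContinuousLinearMap.fst ℝ (Fin d → ℝ) (Fin d → ℝ)))) x :=
    (((hg.differentiable (by simp) x.1).hasFDerivAt).comp x hasFDerivAt_fst).neg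
  have hc : HasFDerivAt (fun x : (Fin d → ℝ) × (Fin d → ℝ) => fderiv ℝ g x.1)
      ((fderiv ℝ (fderiv ℝ g) x.1).comp (ContinuousLinearMap.fst ℝ (Fin d → ℝ) (Fin d → ℝ))) x :=
    (((hg.fderiv_right (m := 1) (WithTop.coe_le_coe.mpr le_top)).differentiable one_ne_zero x.1).hasFDerivAt).comp x hasFDerivAt_fst
  have h2 := hc.clm_apply hasFDerivAt_snd
  have h : HasFDerivAt (fcV d g) ((-((fderiv ℝ g x.1).comp (ContinuousLinearMap.fst ℝ (Fin d → ℝ) (Fin d → ℝ)))).prod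
      ((fderiv ℝ g x.1).comp (ContinuousLinearMap.snd ℝ (Fin d → ℝ) (Fin d → ℝ)) +
        (((fderiv ℝ (fderiv ℝ g) x.1).comp (ContinuousLinearMap.fst ℝ (Fin d → ℝ) (Fin d → ℝ))).flip x.2))) x :=
    h1.prodMk h2
  rw [h.fderiv]
  simp [ContinuousLinearMap.prod_apply]

lemma fderiv_fd_fb (hg : ContDiff ℝ (⊤ : ℕ∞) g) (x : (Fin d → ℝ) × (Fin d → ℝ)) :
    fderiv ℝ (fdV d g) x (0, g x.1) = 0 := by
  set ψ : (Fin d → ℝ) → (Fin d → ℝ) := fun y => fderiv ℝ g y (g y) + fderiv ℝ g y (g y) with hψ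
  have hψs : ContDiff ℝ (⊤ : ℕ∞) ψ :=
    ((hg.fderiv_right (by simp)).clm_apply hg).add ((hg.fderiv_right (by simp)).clm_apply hg)
  have h : HasFDerivAt (fdV d g)
      ((0 : _ →L[ℝ] (Fin d → ℝ)).prod
        ((fderiv ℝ ψ x.1).comp (ContinuousLinearMap.fst ℝ (Fin d → ℝ) (Fin d → ℝ)))) x :=
    (hasFDerivAt_const _ _).prodMk
      (((hψs.differentiable (by simp) x.1).hasFDerivAt).comp x hasFDerivAt_fst)
  rw [h.fderiv]
  simp

lemma step1 (hg : ContDiff ℝ (⊤ : ℕ∞) g) {u : (Fin d → ℝ) × (Fin d → ℝ) → ℝ}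
    (hu : ContDiff ℝ (⊤ : ℕ∞) u) :
    opComm d (Fa d) (Fb d g) u = fun x => fderiv ℝ u x (fcV d g x) := by
  funext x
  have h : Fa d (Fb d g u) x - Fb d g (Fa d u) x
      = fderiv ℝ u x
        (fderiv ℝ (fun x : (Fin d → ℝ) × (Fin d → ℝ) => ((0 : Fin d → ℝ), g x.1)) x (x.2, 0)
          - fderiv ℝ (fun x : (Fin d → ℝ) × (Fin d → ℝ) => (x.2, (0 : Fin d → ℝ))) x (0, g x.1)) :=
    lie_comm hu fa_smooth (fb_smooth hg) x
  simp only [opComm, Pi.sub_apply]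
  rw [h, fderiv_fb_apply hg, fderiv_fa_apply]
  simp [fcV, Prod.mk_sub_mk]

lemma step2 (hg : ContDiff ℝ (⊤ : ℕ∞) g) {u : (Fin d → ℝ) × (Fin d → ℝ) → ℝ}
    (hu : ContDiff ℝ (⊤ : ℕ∞) u) :
    opComm d (Fb d g) (opComm d (Fa d) (Fb d g)) u = fun x => fderiv ℝ u x (fdV d g x) := by
  have hFbu : ContDiff ℝ (⊤ : ℕ∞) (Fb d g u) := lie_smooth hu (fb_smooth hg)
  funext x
  show Fb d g (opComm d (Fa d) (Fb d g) u) x - opComm d (Fa d) (Fb d g) (Fb d g u) x = _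
  rw [step1 hg hu, step1 hg hFbu]
  show Fb d g (fun x => fderiv ℝ u x (fcV d g x)) x - fderiv ℝ (Fb d g u) x (fcV d g x) = _
  have h : Fb d g (fun x => fderiv ℝ u x (fcV d g x)) x
        - fderiv ℝ (Fb d g u) x (fcV d g x)
      = fderiv ℝ u x (fderiv ℝ (fcV d g) x (0, g x.1)
          - fderiv ℝ (fun x : (Fin d → ℝ) × (Fin d → ℝ) => ((0 : Fin d → ℝ), g x.1)) x
            (fcV d g x)) :=
    lie_comm hu (fb_smooth hg) (fc_smooth hg) x
  rw [h, fderiv_fc_fb hg, fderiv_fb_apply hg]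
  simp [fcV, fdV, Prod.mk_sub_mk, sub_neg_eq_add]

end Fields

/-- The iterated commutator [F_b,[F_b,[F_a,F_b]]] vanishes identically on smooth
functions. -/
theorem comm_Fb_Fb_Fa_Fb_eq_zero (d : ℕ) (g : (Fin d → ℝ) → (Fin d → ℝ))
    (hg : ContDiff ℝ (⊤ : ℕ∞) g)
    (u : (Fin d → ℝ) × (Fin d → ℝ) → ℝ) (hu : ContDiff ℝ (⊤ : ℕ∞) u) :
    opComm d (Fb d g) (opComm d (Fb d g) (opComm d (Fa d) (Fb d g))) u = 0 := by
  have hFbu : ContDiff ℝ (⊤ : ℕ∞) (Fb d g u) := lie_smooth hu (fb_smooth hg)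
  funext x
  show Fb d g (opComm d (Fb d g) (opComm d (Fa d) (Fb d g)) u) x
      - opComm d (Fb d g) (opComm d (Fa d) (Fb d g)) (Fb d g u) x = 0
  rw [step2 hg hu, step2 hg hFbu]
  show fderiv ℝ (fun y => fderiv ℝ u y (fdV d g y)) x (0, g x.1)
      - fderiv ℝ (Fb d g u) x (fdV d g x) = 0
  have h : fderiv ℝ (fun y => fderiv ℝ u y (fdV d g y)) x (0, g x.1)
        - fderiv ℝ (Fb d g u) x (fdV d g x)
      = fderiv ℝ u x (fderiv ℝ (fdV d g) x (0, g x.1)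
          - fderiv ℝ (fun x : (Fin d → ℝ) × (Fin d → ℝ) => ((0 : Fin d → ℝ), g x.1)) x
            (fdV d g x)) :=
    lie_comm hu (fb_smooth hg) (fd_smooth hg) x
  rw [h, fderiv_fd_fb hg, fderiv_fb_apply hg]
  simp [fdV, Prod.mk_zero_zero]
end
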